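/- arXiv:2508.16699 — 2 statements merged into one kernel-verified Lean document; each statement's English description precedes it below -/
import Mathlib

section
/- Let n ≥ k ≥ 2 be natural numbers with C(n,k) · 2^{1−C(k,2)} < 1 (equivalently C(n,k) < 2^{C(k,2)−1}, where C(k,2) = k(k−1)/2). Then there exists a 2-coloring of the complete graph on n vertices containing no monochromatic clique of size k; in particular R(k,k) > n. -/
/-- `S` is a monochromatic clique of size `k` for the 2-coloring `c`: all pairs
of distinct vertices in `S` receive the same color. -/
def IsMonoClique {V : Type*} (c : V → V → Bool) (k : ℕ) (S : Finset V) : Prop :=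
  S.card = k ∧ ((∀ x ∈ S, ∀ y ∈ S, x ≠ y → c x y = true) ∨
    (∀ x ∈ S, ∀ y ∈ S, x ≠ y → c x y = false))

/-- The number of boolean functions constant (with value `b`) on a set `T`
is at most `2 ^ (card β - T.card)`. -/
lemma card_filter_const_on {β : Type*} [Fintype β] [DecidableEq β]
    (T : Finset β) (b : Bool) :
    ((Finset.univ : Finset (β → Bool)).filter (fun f => ∀ e ∈ T, f e = b)).card
      ≤ 2 ^ (Fintype.card β - T.card) := by
  classical
  have key := Finset.card_le_card_of_injOn
    (s := (Finset.univ : Finset (β → Bool)).filter (fun f => ∀ e ∈ T, f e = b))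
    (t := (Finset.univ : Finset ({e // e ∈ Tᶜ} → Bool)))
    (f := fun (f : β → Bool) => (fun x : {e // e ∈ Tᶜ} => f x.1))
    (fun a _ => Finset.mem_univ _) ?_
  · calc ((Finset.univ : Finset (β → Bool)).filter (fun f => ∀ e ∈ T, f e = b)).card
        ≤ (Finset.univ : Finset ({e // e ∈ Tᶜ} → Bool)).card := key
      _ = 2 ^ (Fintype.card β - T.card) := by
          rw [Finset.card_univ, Fintype.card_fun, Fintype.card_coe, Finset.card_compl,
            Fintype.card_bool]
  · intro f hf g hg hfg
    simp only [Finset.coe_filter, Set.mem_setOf_eq, Finset.mem_univ, true_and] at hf hg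
    funext e
    by_cases he : e ∈ T
    · rw [hf e he, hg e he]
    · exact congrFun hfg ⟨e, Finset.mem_compl.2 he⟩

/-- Erdős's 1947 probabilistic lower bound: if `C(n,k) · 2^{1 - C(k,2)} < 1`,
then there is a 2-coloring of the complete graph on `n` vertices with no
monochromatic clique of size `k`; in particular `R(k,k) > n`. -/
theorem erdos_coin_flip_lower_bound (n k : ℕ) (hk : 2 ≤ k) (hkn : k ≤ n)
    (h : (n.choose k : ℝ) * (2 : ℝ) ^ ((1 : ℤ) - (k.choose 2 : ℤ)) < 1) :
    ∃ c : Fin n → Fin n → Bool, (∀ x y, x ≠ y → c x y = c y x) ∧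
      ¬ ∃ S : Finset (Fin n), IsMonoClique c k S := by
  classical
  set β := Finset (Fin n)
  set N := Fintype.card β with hN
  set c2 := k.choose 2 with hc2
  have hc1 : 1 ≤ c2 := Nat.choose_pos hk
  -- c2 ≤ N
  have hcN : c2 ≤ N := by
    have h1 : c2 ≤ n.choose 2 := Nat.choose_le_choose 2 hkn
    have h2 : (Finset.powersetCard 2 (Finset.univ : Finset (Fin n))).card = n.choose 2 := by
      rw [Finset.card_powersetCard, Finset.card_univ, Fintype.card_fin]
    have h3 : (Finset.powersetCard 2 (Finset.univ : Finset (Fin n))).card ≤ N :=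
      Finset.card_le_univ _
    omega
  -- natural-number form of the hypothesis
  have hnat : n.choose k < 2 ^ (c2 - 1) := by
    have hp : (0 : ℝ) < (2 : ℝ) ^ ((c2 : ℤ) - 1) := by positivity
    have hkey : (n.choose k : ℝ) < (2 : ℝ) ^ ((c2 : ℤ) - 1) := by
      calc (n.choose k : ℝ)
          = (n.choose k : ℝ) * (2 : ℝ) ^ ((1 : ℤ) - (c2 : ℤ)) * (2 : ℝ) ^ ((c2 : ℤ) - 1) := by
            rw [mul_assoc, ← zpow_add₀ (two_ne_zero)]
            norm_num
        _ < 1 * (2 : ℝ) ^ ((c2 : ℤ) - 1) := mul_lt_mul_of_pos_right h hp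
        _ = (2 : ℝ) ^ ((c2 : ℤ) - 1) := one_mul _
    have hcast : ((c2 : ℤ) - 1) = ((c2 - 1 : ℕ) : ℤ) := by
      omega
    rw [hcast, zpow_natCast] at hkey
    exact_mod_cast hkey
  -- the "monochromatic on S" predicate for a coloring of all finsets
  set Mono : (β → Bool) → Finset (Fin n) → Prop :=
    fun f S => (∀ e ∈ S.powersetCard 2, f e = true) ∨ (∀ e ∈ S.powersetCard 2, f e = false)
    with hMono
  -- union bound
  set BadAll : Finset (β → Bool) :=
    Finset.univ.filter (fun f => ∃ S : Finset (Fin n), S.card = k ∧ Mono f S) with hBadAll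
  have hbadS : ∀ S : Finset (Fin n), S.card = k →
      (Finset.univ.filter (fun f : β → Bool => Mono f S)).card ≤ 2 * 2 ^ (N - c2) := by
    intro S hS
    have hT : (S.powersetCard 2).card = c2 := by
      rw [Finset.card_powersetCard, hS]
    have hsplit : (Finset.univ.filter (fun f : β → Bool => Mono f S)) ⊆
        (Finset.univ.filter (fun f : β → Bool => ∀ e ∈ S.powersetCard 2, f e = true)) ∪
        (Finset.univ.filter (fun f : β → Bool => ∀ e ∈ S.powersetCard 2, f e = false)) := by
      intro f hf
      rw [Finset.mem_filter] at hf
      rcases hf.2 with h1 | h2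
      · exact Finset.mem_union_left _ (Finset.mem_filter.2 ⟨Finset.mem_univ _, h1⟩)
      · exact Finset.mem_union_right _ (Finset.mem_filter.2 ⟨Finset.mem_univ _, h2⟩)
    calc (Finset.univ.filter (fun f : β → Bool => Mono f S)).card
        ≤ ((Finset.univ.filter (fun f : β → Bool => ∀ e ∈ S.powersetCard 2, f e = true)) ∪
           (Finset.univ.filter (fun f : β → Bool => ∀ e ∈ S.powersetCard 2, f e = false))).card :=
          Finset.card_le_card hsplit
      _ ≤ (Finset.univ.filter (fun f : β → Bool => ∀ e ∈ S.powersetCard 2, f e = true)).card +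
          (Finset.univ.filter (fun f : β → Bool => ∀ e ∈ S.powersetCard 2, f e = false)).card :=
          Finset.card_union_le _ _
      _ ≤ 2 ^ (N - c2) + 2 ^ (N - c2) := by
          have h1 := card_filter_const_on (S.powersetCard 2) true
          have h2 := card_filter_const_on (S.powersetCard 2) false
          rw [hT] at h1 h2
          exact add_le_add h1 h2
      _ = 2 * 2 ^ (N - c2) := by ring
  have hsub : BadAll ⊆ (Finset.powersetCard k (Finset.univ : Finset (Fin n))).biUnion
      (fun S => Finset.univ.filter (fun f : β → Bool => Mono f S)) := by
    intro f hf
    rw [hBadAll, Finset.mem_filter] at hf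
    obtain ⟨-, S, hS, hm⟩ := hf
    exact Finset.mem_biUnion.2 ⟨S, Finset.mem_powersetCard.2 ⟨Finset.subset_univ _, hS⟩,
      Finset.mem_filter.2 ⟨Finset.mem_univ _, hm⟩⟩
  have hcardBad : BadAll.card < 2 ^ N := by
    have h1 : BadAll.card ≤ n.choose k * (2 * 2 ^ (N - c2)) := by
      calc BadAll.card
          ≤ ((Finset.powersetCard k (Finset.univ : Finset (Fin n))).biUnion
              (fun S => Finset.univ.filter (fun f : β → Bool => Mono f S))).card :=
            Finset.card_le_card hsub
        _ ≤ ∑ S ∈ Finset.powersetCard k (Finset.univ : Finset (Fin n)),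
              (Finset.univ.filter (fun f : β → Bool => Mono f S)).card :=
            Finset.card_biUnion_le
        _ ≤ ∑ _S ∈ Finset.powersetCard k (Finset.univ : Finset (Fin n)), 2 * 2 ^ (N - c2) := by
            apply Finset.sum_le_sum
            intro S hS
            exact hbadS S (Finset.mem_powersetCard.1 hS).2
        _ = n.choose k * (2 * 2 ^ (N - c2)) := by
            rw [Finset.sum_const, Finset.card_powersetCard, Finset.card_univ, Fintype.card_fin,
              smul_eq_mul]
    have h2 : n.choose k * (2 * 2 ^ (N - c2)) < 2 ^ N := by
      have hpos : 0 < 2 * 2 ^ (N - c2) := by positivity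
      calc n.choose k * (2 * 2 ^ (N - c2))
          < 2 ^ (c2 - 1) * (2 * 2 ^ (N - c2)) := by
            exact Nat.mul_lt_mul_of_lt_of_le hnat (le_refl _) hpos
        _ = 2 ^ ((c2 - 1) + 1 + (N - c2)) := by
            rw [pow_add, pow_add, pow_one]; ring
        _ = 2 ^ N := by congr 1; omega
    omega
  -- pick a good coloring
  have hne : (BadAllᶜ).Nonempty := by
    rw [← Finset.card_pos, Finset.card_compl]
    have : Fintype.card (β → Bool) = 2 ^ N := by
      rw [Fintype.card_fun, Fintype.card_bool]
    omega
  obtain ⟨f, hf⟩ := hne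
  rw [Finset.mem_compl] at hf
  refine ⟨fun x y => f {x, y}, fun x y _ => by show f {x, y} = f {y, x}; rw [Finset.pair_comm], ?_⟩
  rintro ⟨S, hScard, hcol⟩
  apply hf
  rw [hBadAll, Finset.mem_filter]
  refine ⟨Finset.mem_univ _, S, hScard, ?_⟩
  rcases hcol with h1 | h1
  · left
    intro e he
    rw [Finset.mem_powersetCard] at he
    obtain ⟨x, y, hxy, rfl⟩ := Finset.card_eq_two.1 he.2
    exact h1 x (he.1 (Finset.mem_insert_self _ _)) y
      (he.1 (Finset.mem_insert_of_mem (Finset.mem_singleton_self _))) hxy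
  · right
    intro e he
    rw [Finset.mem_powersetCard] at he
    obtain ⟨x, y, hxy, rfl⟩ := Finset.card_eq_two.1 he.2
    exact h1 x (he.1 (Finset.mem_insert_self _ _)) y
      (he.1 (Finset.mem_insert_of_mem (Finset.mem_singleton_self _))) hxy
end

section
/- Let d ≥ 1, γ ≥ 0, let S be an invertible d×d complex matrix, λ : Fin d → ℂ with Re(λ i) ≥ γ for all i, and A = S · diagonal(λ) · S⁻¹. Then for every real α ≥ 0, |trace(exp(−(α : ℂ) • A))| ≤ d · exp(−α·γ). -/
open Matrix

theorem Matrix.trace_exp_conj_diagonal {m 𝔸 : Type*} [Fintype m] [DecidableEq m]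
    [NormedCommRing 𝔸] [NormedAlgebra ℚ 𝔸] [CompleteSpace 𝔸]
    (S : Matrix m m 𝔸) (hS : IsUnit S) (v : m → 𝔸) :
    trace (NormedSpace.exp (S * diagonal v * S⁻¹)) = ∑ i, NormedSpace.exp (v i) := by
  rw [exp_conj _ _ hS, trace_conj hS, exp_diagonal, Pi.exp_def, trace_diagonal]

theorem Complex.norm_sum_exp_le {ι : Type*} [Fintype ι] (v : ι → ℂ) (c : ℝ)
    (hv : ∀ i, (v i).re ≤ c) :
    ‖∑ i, Complex.exp (v i)‖ ≤ Fintype.card ι * Real.exp c :=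
  calc ‖∑ i, Complex.exp (v i)‖ ≤ ∑ i, ‖Complex.exp (v i)‖ := norm_sum_le _ _
    _ ≤ ∑ _i : ι, Real.exp c := by
        gcongr with i
        rw [Complex.norm_exp]
        exact Real.exp_le_exp.mpr (hv i)
    _ = Fintype.card ι * Real.exp c := by simp

theorem abs_trace_exp_le_general (d : ℕ) (γ : ℝ)
    (S : Matrix (Fin d) (Fin d) ℂ) (hS : IsUnit S)
    (l : Fin d → ℂ) (hl : ∀ i, γ ≤ (l i).re)
    (A : Matrix (Fin d) (Fin d) ℂ) (hA : A = S * Matrix.diagonal l * S⁻¹)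
    (α : ℝ) (hα : 0 ≤ α) :
    ‖Matrix.trace (NormedSpace.exp (-(α : ℂ) • A))‖ ≤
      d * Real.exp (-(α * γ)) := by
  have hconj : -(α : ℂ) • A = S * diagonal (-(α : ℂ) • l) * S⁻¹ := by
    rw [hA, diagonal_smul, Matrix.mul_smul, Matrix.smul_mul]
  have hre : ∀ i, ((-(α : ℂ) • l) i).re ≤ -(α * γ) := fun i => by
    simpa using mul_le_mul_of_nonneg_left (hl i) hα
  rw [hconj, trace_exp_conj_diagonal S hS, ← Complex.exp_eq_exp_ℂ]
  simpa using Complex.norm_sum_exp_le _ _ hre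

/-- Exponential collapse bound: if `A = S · diagonal λ · S⁻¹` with
`Re (λ i) ≥ γ` for all `i`, then for every real `α ≥ 0`,
`|trace (exp (-α • A))| ≤ d · exp (-α·γ)`. -/
theorem abs_trace_exp_le (d : ℕ) (hd : 1 ≤ d) (γ : ℝ) (hγ : 0 ≤ γ)
    (S : Matrix (Fin d) (Fin d) ℂ) (hS : IsUnit S)
    (l : Fin d → ℂ) (hl : ∀ i, γ ≤ (l i).re)
    (A : Matrix (Fin d) (Fin d) ℂ) (hA : A = S * Matrix.diagonal l * S⁻¹)
    (α : ℝ) (hα : 0 ≤ α) :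
    ‖Matrix.trace (NormedSpace.exp (-(α : ℂ) • A))‖ ≤
      d * Real.exp (-(α * γ)) :=
  abs_trace_exp_le_general d γ S hS l hl A hA α hα
end
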